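/- For k ≥ 1 and 1 ≤ s ≤ k, the number of binary words x of length 2k+1 with |Z(x)| = s equals C(2k+2, k-s+1). -/

import Mathlib

/-- Number of 0's (`false`) at odd positions (1-based) of a binary word. -/
def oddZeros (x : List Bool) : ℕ :=
  ((x.zipIdx.map Prod.swap).filter (fun p => p.1 % 2 = 0 && p.2 == false)).length

/-- Number of 0's (`false`) at even positions (1-based) of a binary word. -/
def evenZeros (x : List Bool) : ℕ :=
  ((x.zipIdx.map Prod.swap).filter (fun p => p.1 % 2 = 1 && p.2 == false)).length

/-- Z(x) = odd(x) - even(x). -/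
def Zw (x : List Bool) : ℤ := (oddZeros x : ℤ) - (evenZeros x : ℤ)


/-! Flipping the letters at the paper's even positions is an involution on words of length
`2k + 1` which turns `Z(x)` into `(number of 0's of the flipped word) - k`. Hence exactly
`C(2k+1, k+t)` words have `Z = t`, and for `1 ≤ s ≤ k` the words with `|Z| = s` number
`C(2k+1, k+s) + C(2k+1, k-s) = C(2k+1, k-s+1) + C(2k+1, k-s) = C(2k+2, k-s+1)`. -/

open Finset

lemma List.length_filter_ofFn {α : Type*} {n : ℕ} (f : Fin n → α) (p : α → Bool) :
    ((List.ofFn f).filter p).length = #{i | p (f i)} := by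
  rw [← List.countP_eq_length_filter]
  induction n with
  | zero => simp
  | succ n ih => rw [List.ofFn_succ, List.countP_cons, Fin.card_filter_univ_succ', ih, add_comm]

lemma List.zipIdx_ofFn_map_swap {α : Type*} {n : ℕ} (f : Fin n → α) :
    (List.ofFn f).zipIdx.map Prod.swap = List.ofFn (fun i => (i.val, f i)) := by
  apply List.ext_getElem <;> simp

lemma Fin.card_filter_mod_two_eq_one (n : ℕ) : #{i : Fin n | i.val % 2 = 1} = n / 2 := by
  rw [card_filter, Fin.sum_univ_eq_sum_range (fun i => if i % 2 = 1 then 1 else 0)]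
  induction n with
  | zero => simp
  | succ n ih =>
    rw [sum_range_succ, ih]
    split_ifs <;> omega

lemma card_filter_card_eq_false_eq_choose {α : Type*} [Fintype α] [DecidableEq α] (m : ℕ) :
    #{y : α → Bool | #{a | y a = false} = m} = (Fintype.card α).choose m := by
  rw [← card_univ, ← card_powersetCard]
  refine card_nbij' (fun y => ({a | y a = false} : Finset α)) (fun S a => !decide (a ∈ S))
    ?_ ?_ ?_ ?_ <;> intro _ <;> simp

lemma oddZeros_ofFn {n : ℕ} (x : Fin n → Bool) :
    oddZeros (List.ofFn x) = #{i : Fin n | i.val % 2 = 0 ∧ x i = false} := by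
  simp [oddZeros, List.zipIdx_ofFn_map_swap, List.length_filter_ofFn]

lemma evenZeros_ofFn {n : ℕ} (x : Fin n → Bool) :
    evenZeros (List.ofFn x) = #{i : Fin n | i.val % 2 = 1 ∧ x i = false} := by
  simp [evenZeros, List.zipIdx_ofFn_map_swap, List.length_filter_ofFn]

/-- Indices are 0-based here, so odd `i` are the paper's even positions. -/
def flipOdd {n : ℕ} (x : Fin n → Bool) : Fin n → Bool := fun i => x i ^^ (i.val % 2 == 1)

lemma flipOdd_flipOdd {n : ℕ} (x : Fin n → Bool) : flipOdd (flipOdd x) = x := by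
  funext i
  simp [flipOdd]

lemma Zw_ofFn_add_card_odd {n : ℕ} (x : Fin n → Bool) :
    Zw (List.ofFn x) + #{i : Fin n | i.val % 2 = 1} = #{i | flipOdd x i = false} := by
  rw [Zw, oddZeros_ofFn, evenZeros_ofFn]
  simp only [card_filter, Nat.cast_sum, Nat.cast_ite, Nat.cast_one, Nat.cast_zero,
    ← sum_sub_distrib, ← sum_add_distrib]
  refine sum_congr rfl fun i _ => ?_
  rcases Nat.mod_two_eq_zero_or_one i.val with h | h <;> cases hx : x i <;> simp [flipOdd, h, hx]

lemma card_filter_Zw_ofFn_add_eq_choose (n m : ℕ) :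
    #{x : Fin n → Bool | Zw (List.ofFn x) + ↑(n / 2) = m} = n.choose m := by
  simp_rw [← Fin.card_filter_mod_two_eq_one, Zw_ofFn_add_card_odd, Nat.cast_inj]
  calc #{x : Fin n → Bool | #{i | flipOdd x i = false} = m}
      = #{y : Fin n → Bool | #{i | y i = false} = m} :=
        card_nbij' flipOdd flipOdd (fun _ => by simp) (fun _ => by simp [flipOdd_flipOdd])
          (fun _ _ => flipOdd_flipOdd _) (fun _ _ => flipOdd_flipOdd _)
    _ = n.choose m := by rw [card_filter_card_eq_false_eq_choose, Fintype.card_fin]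

theorem card_absZ_eq_s_odd_length_general (k s : ℕ) (hs1 : 1 ≤ s) (hsk : s ≤ k) :
    (Finset.univ.filter (fun x : Fin (2 * k + 1) → Bool => |Zw (List.ofFn x)| = (s : ℤ))).card =
      Nat.choose (2 * k + 2) (k - s + 1) := by
  have hcount := card_filter_Zw_ofFn_add_eq_choose (2 * k + 1)
  rw [show (2 * k + 1) / 2 = k by omega] at hcount
  have habs (x : Fin (2 * k + 1) → Bool) : |Zw (List.ofFn x)| = s ↔
      Zw (List.ofFn x) + k = ↑(k + s) ∨ Zw (List.ofFn x) + k = ↑(k - s) := by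
    rw [abs_eq (by positivity)]
    omega
  rw [filter_congr fun x _ => habs x, filter_or,
    card_union_of_disjoint (disjoint_filter.mpr fun x _ h => by omega), hcount, hcount,
    Nat.choose_symm_of_eq_add (by omega : 2 * k + 1 = k + s + (k - s + 1)), add_comm]
  exact (Nat.choose_succ_succ' _ _).symm

theorem card_absZ_eq_s_odd_length (k s : ℕ) (hk : 1 ≤ k) (hs1 : 1 ≤ s) (hsk : s ≤ k) :
    (Finset.univ.filter (fun x : Fin (2 * k + 1) → Bool => |Zw (List.ofFn x)| = (s : ℤ))).card =
      Nat.choose (2 * k + 2) (k - s + 1) :=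
  card_absZ_eq_s_odd_length_general k s hs1 hsk
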